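/- Let C ∈ (ℚ[t])⟦q⟧ be the formal power series whose coefficient of qⁿ tᵏ is the number of level one cheesy polyominoes with area n whose last column has height k. Let C₁ = C(q,1) ∈ ℚ⟦q⟧ and D₁ = (∂C/∂t)(q,1) ∈ ℚ⟦q⟧. Then the following identity holds in (ℚ[t])⟦q⟧: (1 − qt)² · C = qt(1 − qt) + qt · C₁ + qt(1 − qt) · D₁ + q²t³ · (D₁ − C₁) (equivalently, C = qt/(1−qt) + qt/(1−qt)² · C₁ + qt/(1−qt) · D₁ + q²t³/(1−qt)² · (D₁ − C₁)). -/

import Mathlib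

open Finset Filter

noncomputable section

/-- A cell of the hexagonal lattice, modelled as a point of ℤ². -/
abbrev Cell : Type := ℤ × ℤ

/-- Hexagonal adjacency on ℤ². -/
def HexAdj (a b : Cell) : Prop :=
  (b.1 - a.1, b.2 - a.2) ∈
    ({(1,0), (-1,0), (0,1), (0,-1), (1,1), (-1,-1)} : Set (ℤ × ℤ))

/-- A (hexagonal-celled) polyomino: a finite nonempty set of cells,
connected under hexagonal adjacency. -/
def IsPolyomino (P : Finset Cell) : Prop :=
  P.Nonempty ∧ ∀ a ∈ P, ∀ b ∈ P,
    Relation.ReflTransGen (fun u v : Cell => u ∈ P ∧ v ∈ P ∧ HexAdj u v) a b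

/-- The canonical representative of a translation class: both the minimal
abscissa and the minimal ordinate are `0`. -/
def Normalized (P : Finset Cell) : Prop :=
  (∀ c ∈ P, 0 ≤ c.1 ∧ 0 ≤ c.2) ∧ (∃ c ∈ P, c.1 = 0) ∧ (∃ c ∈ P, c.2 = 0)

/-- Ordinates of the cells of the column of `P` at abscissa `x`. -/
def columnYs (P : Finset Cell) (x : ℤ) : Finset ℤ :=
  (P.filter (fun c => c.1 = x)).image Prod.snd

/-- Number of connected components (maximal runs of consecutive integers) of a
finite set of integers: each component is counted via its least element. -/
def numComponents (s : Finset ℤ) : ℕ := (s.filter (fun a => a - 1 ∉ s)).card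

/-- Every nonempty column has exactly one connected component. -/
def ColumnConvex (P : Finset Cell) : Prop :=
  ∀ x : ℤ, (columnYs P x).Nonempty → numComponents (columnYs P x) = 1

/-- `a` and `b` lie in the same connected component of `s`. -/
def SameComp (s : Finset ℤ) (a b : ℤ) : Prop :=
  a ∈ s ∧ b ∈ s ∧ ∀ c : ℤ, min a b ≤ c → c ≤ max a b → c ∈ s

/-- The leftmost nonempty column has exactly one connected component and, for
every pair of nonempty columns at consecutive abscissas `x`, `x+1`, every
connected component of the column at `x+1` contains a cell adjacent to some
cell of the column at `x`. -/
def RightwardSemiDirected (P : Finset Cell) : Prop :=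
  (∀ x : ℤ, (columnYs P x).Nonempty → (∀ x' : ℤ, x' < x → columnYs P x' = ∅) →
      numComponents (columnYs P x) = 1) ∧
  (∀ x : ℤ, (columnYs P x).Nonempty → (columnYs P (x+1)).Nonempty →
      ∀ b ∈ columnYs P (x+1), ∃ b' ∈ columnYs P (x+1),
        SameComp (columnYs P (x+1)) b b' ∧
        ∃ c ∈ columnYs P x, HexAdj (x, c) (x+1, b'))

/-- The cells of the gap(s) of a column: the integers between the least and the
greatest element that do not belong to the column. -/
def gapCells (s : Finset ℤ) : Finset ℤ :=
  Finset.Icc (WithTop.untopD 0 s.min) (WithBot.unbotD 0 s.max) \ s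

def gapSize (s : Finset ℤ) : ℕ := (gapCells s).card

/-- Level `m` cheesy polyomino. -/
def IsCheesy (m : ℕ) (P : Finset Cell) : Prop :=
  IsPolyomino P ∧ RightwardSemiDirected P ∧
  ∀ x : ℤ, numComponents (columnYs P x) ≤ 2 ∧
    (numComponents (columnYs P x) = 2 → gapSize (columnYs P x) ≤ m)

/-- Height of a (nonempty) column: max − min + 1. -/
def heightN (s : Finset ℤ) : ℕ :=
  (WithBot.unbotD 0 s.max - WithTop.untopD 0 s.min + 1).toNat

/-- The maximal abscissa of a polyomino. -/
def maxX (P : Finset Cell) : ℤ := WithBot.unbotD 0 (P.image Prod.fst).max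

/-- The last column (ordinates of the column of maximal abscissa). -/
def lastCol (P : Finset Cell) : Finset ℤ := columnYs P (maxX P)

/-- Number of level one cheesy polyominoes with area `n` whose last column has
height `k`, counted up to translation. -/
def c1CountHt (n k : ℕ) : ℕ :=
  Nat.card {P : Finset Cell // IsCheesy 1 P ∧ Normalized P ∧
    P.card = n ∧ heightN (lastCol P) = k}

/-- The area and last column generating function `C ∈ (ℚ[t])⟦q⟧` of level one
cheesy polyominoes: the coefficient of `qⁿtᵏ` is `c1CountHt n k` (the height of
the last column never exceeds `n + 1`). -/
def Cser : PowerSeries (Polynomial ℚ) :=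
  PowerSeries.mk fun n =>
    ∑ k ∈ Finset.range (n + 2), Polynomial.C (c1CountHt n k : ℚ) * Polynomial.X ^ k

/-- `C₁ = C(q,1)`. -/
def C1 : PowerSeries ℚ :=
  PowerSeries.mk fun n => Polynomial.eval 1 (PowerSeries.coeff (R := Polynomial ℚ) n Cser)

/-- `D₁ = (∂C/∂t)(q,1)`. -/
def D1 : PowerSeries ℚ :=
  PowerSeries.mk fun n =>
    Polynomial.eval 1 (Polynomial.derivative (PowerSeries.coeff (R := Polynomial ℚ) n Cser))

/-- Embedding of `ℚ⟦q⟧` into `(ℚ[t])⟦q⟧`. -/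
def liftP : PowerSeries ℚ →+* PowerSeries (Polynomial ℚ) :=
  PowerSeries.map (Polynomial.C : ℚ →+* Polynomial ℚ)

/-- The variable `q` of `(ℚ[t])⟦q⟧`. -/
def qp : PowerSeries (Polynomial ℚ) := PowerSeries.X

/-- The variable `t` of `(ℚ[t])⟦q⟧`. -/
def tp : PowerSeries (Polynomial ℚ) := PowerSeries.C (R := Polynomial ℚ) Polynomial.X

/-!
Every level one cheesy polyomino with at least two columns arises in exactly one way from its
prefix `Q` (delete the last column) by appending a column each of whose components touches the
last column of `Q`. If that last column spans `[m, M]`, the cells touching it span `[m, M + 1]`,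
so a new column of height `h` is either an interval (`h + (M - m + 1)` choices, area `h`) or has a
one-cell gap (`(h - 2) (M - m)` choices, area `h - 1`). Summing over prefixes gives, for `h ≥ 1`,
`c(n, h) = [n = h] + ∑_{|Q| = n - h} (h + ht Q) + ∑_{|Q| = n + 1 - h} (h - 2) (ht Q - 1)`,
and in generating functions the sums over `h` become geometric series in `qt`.
-/

open scoped Classical

lemma HexAdj.symm {a b : Cell} (h : HexAdj a b) : HexAdj b a := by
  simp only [HexAdj, Set.mem_insert_iff, Set.mem_singleton_iff, Prod.mk.injEq] at h ⊢
  omega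

lemma HexAdj.fst_le_add_one {a b : Cell} (h : HexAdj a b) :
    b.1 ≤ a.1 + 1 ∧ a.1 ≤ b.1 + 1 := by
  simp only [HexAdj, Set.mem_insert_iff, Set.mem_singleton_iff, Prod.mk.injEq] at h
  omega

lemma HexAdj.snd_le_add_one {a b : Cell} (h : HexAdj a b) :
    b.2 ≤ a.2 + 1 ∧ a.2 ≤ b.2 + 1 := by
  simp only [HexAdj, Set.mem_insert_iff, Set.mem_singleton_iff, Prod.mk.injEq] at h
  omega

lemma hexAdj_add_one_iff {x c b : ℤ} : HexAdj (x, c) (x + 1, b) ↔ b = c ∨ b = c + 1 := by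
  simp only [HexAdj, Set.mem_insert_iff, Set.mem_singleton_iff, Prod.mk.injEq]
  omega

lemma hexAdj_up (x y : ℤ) : HexAdj (x, y) (x, y + 1) := by
  simp [HexAdj]

/-- The steps of the paths in `IsPolyomino`. -/
def AdjIn (P : Finset Cell) (u v : Cell) : Prop := u ∈ P ∧ v ∈ P ∧ HexAdj u v

instance {P : Finset Cell} : Std.Symm (AdjIn P) :=
  ⟨fun _ _ h => ⟨h.2.1, h.1, h.2.2.symm⟩⟩

lemma reflTransGen_adjIn_symm {P : Finset Cell} {u v : Cell}
    (h : Relation.ReflTransGen (AdjIn P) u v) : Relation.ReflTransGen (AdjIn P) v u :=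
  Std.Symm.symm _ _ h

/-! ### Lowest and highest elements of a finite set of integers -/

/-- The minimum of `s`, as it occurs in `gapCells` and `heightN` (junk value `0` when `s = ∅`). -/
def lowest (s : Finset ℤ) : ℤ := WithTop.untopD 0 s.min

/-- The maximum of `s` (junk value `0` when `s = ∅`). -/
def highest (s : Finset ℤ) : ℤ := WithBot.unbotD 0 s.max

section LowestHighest

variable {s : Finset ℤ} {a b g y : ℤ}

lemma lowest_eq_min' (hs : s.Nonempty) : lowest s = s.min' hs := by
  rw [lowest, ← Finset.coe_min' hs, WithTop.untopD_coe]

lemma highest_eq_max' (hs : s.Nonempty) : highest s = s.max' hs := by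
  rw [highest, ← Finset.coe_max' hs, WithBot.unbotD_coe]

lemma lowest_mem (hs : s.Nonempty) : lowest s ∈ s := lowest_eq_min' hs ▸ s.min'_mem hs

lemma highest_mem (hs : s.Nonempty) : highest s ∈ s := highest_eq_max' hs ▸ s.max'_mem hs

lemma lowest_le (hy : y ∈ s) : lowest s ≤ y := lowest_eq_min' ⟨y, hy⟩ ▸ s.min'_le y hy

lemma le_highest (hy : y ∈ s) : y ≤ highest s := highest_eq_max' ⟨y, hy⟩ ▸ s.le_max' y hy

lemma lowest_eq_of_forall (ha : a ∈ s) (h : ∀ y ∈ s, a ≤ y) : lowest s = a :=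
  le_antisymm (lowest_le ha) (h _ (lowest_mem ⟨a, ha⟩))

lemma highest_eq_of_forall (ha : a ∈ s) (h : ∀ y ∈ s, y ≤ a) : highest s = a :=
  le_antisymm (h _ (highest_mem ⟨a, ha⟩)) (le_highest ha)

lemma lowest_le_highest (hs : s.Nonempty) : lowest s ≤ highest s :=
  le_highest (lowest_mem hs)

lemma subset_Icc_lowest_highest : s ⊆ Finset.Icc (lowest s) (highest s) := fun _ hy =>
  Finset.mem_Icc.2 ⟨lowest_le hy, le_highest hy⟩

lemma gapCells_eq : gapCells s = Finset.Icc (lowest s) (highest s) \ s := rfl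

lemma heightN_eq : heightN s = (highest s - lowest s + 1).toNat := rfl

lemma one_le_heightN (hs : s.Nonempty) : 1 ≤ heightN s := by
  have := lowest_le_highest hs
  rw [heightN_eq]; omega

lemma mem_Icc_sdiff_singleton : y ∈ Finset.Icc a b \ {g} ↔ a ≤ y ∧ y ≤ b ∧ y ≠ g := by
  simp only [Finset.mem_sdiff, Finset.mem_Icc, Finset.mem_singleton, and_assoc]

lemma lowest_Icc (h : a ≤ b) : lowest (Finset.Icc a b) = a :=
  lowest_eq_of_forall (Finset.mem_Icc.2 ⟨le_rfl, h⟩) fun _ hy => (Finset.mem_Icc.1 hy).1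

lemma highest_Icc (h : a ≤ b) : highest (Finset.Icc a b) = b :=
  highest_eq_of_forall (Finset.mem_Icc.2 ⟨h, le_rfl⟩) fun _ hy => (Finset.mem_Icc.1 hy).2

lemma lowest_Icc_sdiff (h1 : a < g) (h2 : g < b) : lowest (Finset.Icc a b \ {g}) = a :=
  lowest_eq_of_forall (mem_Icc_sdiff_singleton.2 ⟨le_rfl, by omega, by omega⟩)
    fun _ hy => (mem_Icc_sdiff_singleton.1 hy).1

lemma highest_Icc_sdiff (h1 : a < g) (h2 : g < b) : highest (Finset.Icc a b \ {g}) = b :=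
  highest_eq_of_forall (mem_Icc_sdiff_singleton.2 ⟨by omega, le_rfl, by omega⟩)
    fun _ hy => (mem_Icc_sdiff_singleton.1 hy).2.1

lemma heightN_Icc (h : a ≤ b) : heightN (Finset.Icc a b) = (b - a + 1).toNat := by
  rw [heightN_eq, lowest_Icc h, highest_Icc h]

lemma heightN_Icc_sdiff (h1 : a < g) (h2 : g < b) :
    heightN (Finset.Icc a b \ {g}) = (b - a + 1).toNat := by
  rw [heightN_eq, lowest_Icc_sdiff h1 h2, highest_Icc_sdiff h1 h2]

lemma gapCells_Icc (h : a ≤ b) : gapCells (Finset.Icc a b) = ∅ := by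
  rw [gapCells_eq, lowest_Icc h, highest_Icc h, Finset.sdiff_self]

lemma gapCells_Icc_sdiff (h1 : a < g) (h2 : g < b) :
    gapCells (Finset.Icc a b \ {g}) = {g} := by
  rw [gapCells_eq, lowest_Icc_sdiff h1 h2, highest_Icc_sdiff h1 h2,
    Finset.sdiff_sdiff_eq_self (by simp; omega)]

lemma card_Icc_sdiff (h1 : a < g) (h2 : g < b) :
    (Finset.Icc a b \ {g}).card = (b - a).toNat := by
  rw [Finset.card_sdiff_of_subset (by simp; omega), Int.card_Icc, Finset.card_singleton]
  omega

end LowestHighest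

/-! ### Connected components of a column -/

section Components

variable {s : Finset ℤ} {a b g : ℤ}

lemma numComponents_Icc (h : a ≤ b) : numComponents (Finset.Icc a b) = 1 := by
  rw [numComponents, Finset.card_eq_one]
  refine ⟨a, Finset.ext fun x => ?_⟩
  simp only [Finset.mem_filter, Finset.mem_Icc, Finset.mem_singleton]
  omega

lemma numComponents_Icc_sdiff (h1 : a < g) (h2 : g < b) :
    numComponents (Finset.Icc a b \ {g}) = 2 := by
  rw [numComponents, Finset.card_eq_two]
  refine ⟨a, g + 1, by omega, ?_⟩
  ext x
  simp only [Finset.mem_filter, mem_Icc_sdiff_singleton, Finset.mem_insert, Finset.mem_singleton]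
  omega

/-- The least element above a missing point `g` starts a component other than the lowest one. -/
lemma two_le_numComponents (hs : s.Nonempty) (hg : g ∉ s) (h1 : lowest s ≤ g)
    (h2 : g ≤ highest s) : 2 ≤ numComponents s := by
  have hne : (s.filter (g < ·)).Nonempty := ⟨highest s, Finset.mem_filter.2
    ⟨highest_mem hs, lt_of_le_of_ne h2 fun h => hg (h ▸ highest_mem hs)⟩⟩
  set a := (s.filter (g < ·)).min' hne
  obtain ⟨ha, hga⟩ := Finset.mem_filter.1 (Finset.min'_mem _ hne)
  have ha_min : ∀ y ∈ s, g < y → a ≤ y := fun y hy hgy =>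
    Finset.min'_le _ _ (Finset.mem_filter.2 ⟨hy, hgy⟩)
  have ha_start : a - 1 ∉ s := fun h => by
    rcases eq_or_lt_of_le (show g ≤ a - 1 by omega) with heq | hlt
    · exact hg (heq ▸ h)
    · have := ha_min _ h hlt; omega
  have hlow_start : lowest s - 1 ∉ s := fun h => by have := lowest_le h; omega
  calc 2 = ({lowest s, a} : Finset ℤ).card := (Finset.card_pair (by omega)).symm
    _ ≤ numComponents s := Finset.card_le_card <| by
      simp only [Finset.insert_subset_iff, Finset.singleton_subset_iff, Finset.mem_filter]
      exact ⟨⟨lowest_mem hs, hlow_start⟩, ha, ha_start⟩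

lemma eq_Icc_of_gapCells_eq_empty (h : gapCells s = ∅) :
    s = Finset.Icc (lowest s) (highest s) :=
  subset_antisymm subset_Icc_lowest_highest (Finset.sdiff_eq_empty_iff_subset.1 h)

lemma eq_Icc_of_numComponents_eq_one (hs : s.Nonempty) (h : numComponents s = 1) :
    s = Finset.Icc (lowest s) (highest s) := by
  refine eq_Icc_of_gapCells_eq_empty (Finset.eq_empty_of_forall_notMem fun g hg => ?_)
  rw [gapCells_eq, Finset.mem_sdiff, Finset.mem_Icc] at hg
  have := two_le_numComponents hs hg.2 hg.1.1 hg.1.2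
  omega

def IsCheesyColumn (m : ℕ) (s : Finset ℤ) : Prop :=
  numComponents s ≤ 2 ∧ (numComponents s = 2 → gapSize s ≤ m)

lemma IsCheesyColumn.eq_Icc_or_eq_Icc_sdiff (h : IsCheesyColumn 1 s) (hs : s.Nonempty) :
    s = Finset.Icc (lowest s) (highest s) ∨
      ∃ g, lowest s < g ∧ g < highest s ∧ s = Finset.Icc (lowest s) (highest s) \ {g} := by
  rcases (gapCells s).eq_empty_or_nonempty with hempty | ⟨g, hg⟩
  · exact Or.inl (eq_Icc_of_gapCells_eq_empty hempty)
  right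
  have hg' := hg
  rw [gapCells_eq, Finset.mem_sdiff, Finset.mem_Icc] at hg'
  obtain ⟨⟨hg1, hg2⟩, hgs⟩ := hg'
  have hsingle : gapCells s = {g} :=
    Finset.eq_singleton_iff_unique_mem.2 ⟨hg, fun y hy => Finset.card_le_one.1
      (h.2 (le_antisymm h.1 (two_le_numComponents hs hgs hg1 hg2))) y hy g hg⟩
  refine ⟨g, lt_of_le_of_ne hg1 fun h => hgs (h ▸ lowest_mem hs),
    lt_of_le_of_ne hg2 fun h => hgs (h ▸ highest_mem hs), ?_⟩
  rw [← hsingle, gapCells_eq, Finset.sdiff_sdiff_eq_self subset_Icc_lowest_highest]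

lemma isCheesyColumn_empty (m : ℕ) : IsCheesyColumn m ∅ := by
  simp [IsCheesyColumn, numComponents]

lemma isCheesyColumn_Icc (m : ℕ) (h : a ≤ b) : IsCheesyColumn m (Finset.Icc a b) := by
  simp [IsCheesyColumn, numComponents_Icc h]

lemma isCheesyColumn_Icc_sdiff (h1 : a < g) (h2 : g < b) :
    IsCheesyColumn 1 (Finset.Icc a b \ {g}) := by
  simp [IsCheesyColumn, numComponents_Icc_sdiff h1 h2, gapSize, gapCells_Icc_sdiff h1 h2]

lemma card_eq_heightN_of_gapCells_eq_empty (hs : s.Nonempty) (hgap : gapCells s = ∅) :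
    s.card = heightN s := by
  have := lowest_le_highest hs
  rw [eq_Icc_of_gapCells_eq_empty hgap, heightN_Icc this, Int.card_Icc]
  omega

lemma IsCheesyColumn.card_add_one_eq_heightN (h : IsCheesyColumn 1 s) (hs : s.Nonempty)
    (hgap : gapCells s ≠ ∅) : s.card + 1 = heightN s := by
  rcases IsCheesyColumn.eq_Icc_or_eq_Icc_sdiff h hs with hI | ⟨g, hg1, hg2, hI⟩
  · exact absurd (by rw [hI]; exact gapCells_Icc (lowest_le_highest hs)) hgap
  · rw [hI, heightN_Icc_sdiff hg1 hg2, card_Icc_sdiff hg1 hg2]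
    omega

end Components

/-! ### Vertical translation -/

section Translation

variable {s : Finset ℤ} {d : ℤ}

lemma mem_image_add_iff {y : ℤ} : y ∈ s.image (· + d) ↔ y - d ∈ s := by
  simp only [Finset.mem_image]
  exact ⟨fun ⟨a, ha, h⟩ => by rwa [← h, add_sub_cancel_right],
    fun h => ⟨y - d, h, sub_add_cancel y d⟩⟩

lemma add_mem_image_add {a : ℤ} (ha : a ∈ s) : a + d ∈ s.image (· + d) :=
  Finset.mem_image_of_mem _ ha

lemma numComponents_image_add : numComponents (s.image (· + d)) = numComponents s := by
  have : (s.image (· + d)).filter (fun a => a - 1 ∉ s.image (· + d))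
      = (s.filter fun a => a - 1 ∉ s).image (· + d) := by
    ext y
    simp only [Finset.mem_filter, mem_image_add_iff, sub_right_comm]
  rw [numComponents, numComponents, this, Finset.card_image_of_injective _ (add_left_injective d)]

lemma lowest_image_add (hs : s.Nonempty) : lowest (s.image (· + d)) = lowest s + d :=
  lowest_eq_of_forall (add_mem_image_add (lowest_mem hs))
    fun _ hy => by have := lowest_le (mem_image_add_iff.1 hy); omega

lemma highest_image_add (hs : s.Nonempty) : highest (s.image (· + d)) = highest s + d :=
  highest_eq_of_forall (add_mem_image_add (highest_mem hs))
    fun _ hy => by have := le_highest (mem_image_add_iff.1 hy); omega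

lemma heightN_image_add (hs : s.Nonempty) : heightN (s.image (· + d)) = heightN s := by
  rw [heightN_eq, heightN_eq, lowest_image_add hs, highest_image_add hs]
  congr 1; ring

lemma gapSize_image_add (hs : s.Nonempty) : gapSize (s.image (· + d)) = gapSize s := by
  have : gapCells (s.image (· + d)) = (gapCells s).image (· + d) := by
    ext y
    simp only [gapCells_eq, lowest_image_add hs, highest_image_add hs, Finset.mem_sdiff,
      Finset.mem_Icc, mem_image_add_iff]
    constructor <;> rintro ⟨⟨h1, h2⟩, h3⟩ <;> exact ⟨⟨by omega, by omega⟩, h3⟩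
  rw [gapSize, gapSize, this, Finset.card_image_of_injective _ (add_left_injective d)]

lemma SameComp.image_add {a b : ℤ} (h : SameComp s a b) :
    SameComp (s.image (· + d)) (a + d) (b + d) :=
  ⟨add_mem_image_add h.1, add_mem_image_add h.2.1, fun c hc1 hc2 =>
    mem_image_add_iff.2 (h.2.2 _ (by omega) (by omega))⟩

def shiftUp (d : ℤ) (P : Finset Cell) : Finset Cell := P.image fun c => (c.1, c.2 + d)

variable {P : Finset Cell}

lemma mem_shiftUp {x y : ℤ} : (x, y) ∈ shiftUp d P ↔ (x, y - d) ∈ P := by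
  simp only [shiftUp, Finset.mem_image, Prod.exists, Prod.mk.injEq]
  constructor
  · rintro ⟨a, b, h, rfl, rfl⟩; simpa using h
  · exact fun h => ⟨x, y - d, h, rfl, by ring⟩

lemma shiftUp_shiftUp {e : ℤ} : shiftUp d (shiftUp e P) = shiftUp (d + e) P := by
  ext ⟨x, y⟩
  simp only [mem_shiftUp, sub_sub, add_comm d]

lemma shiftUp_zero : shiftUp 0 P = P := by
  ext ⟨x, y⟩
  simp only [mem_shiftUp, sub_zero]

lemma card_shiftUp : (shiftUp d P).card = P.card :=
  Finset.card_image_of_injective _ fun a b h => by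
    simp only [Prod.mk.injEq, add_left_inj] at h; exact Prod.ext h.1 h.2

lemma mem_columnYs {x y : ℤ} : y ∈ columnYs P x ↔ (x, y) ∈ P := by
  simp only [columnYs, Finset.mem_image, Finset.mem_filter, Prod.exists]
  exact ⟨fun ⟨_, _, ⟨h, ha⟩, hb⟩ => ha ▸ hb ▸ h,
    fun h => ⟨x, y, ⟨h, rfl⟩, rfl⟩⟩

lemma columnYs_shiftUp {x : ℤ} : columnYs (shiftUp d P) x = (columnYs P x).image (· + d) := by
  ext y
  rw [mem_columnYs, mem_shiftUp, mem_image_add_iff, mem_columnYs]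

lemma columnYs_nonempty_iff {x : ℤ} : (columnYs P x).Nonempty ↔ x ∈ P.image Prod.fst := by
  simp only [Finset.Nonempty, mem_columnYs, Finset.mem_image, Prod.exists]
  exact ⟨fun ⟨y, hy⟩ => ⟨x, y, hy, rfl⟩, fun ⟨a, b, h, ha⟩ => ⟨b, ha ▸ h⟩⟩

lemma maxX_shiftUp : maxX (shiftUp d P) = maxX P := by
  have : (shiftUp d P).image Prod.fst = P.image Prod.fst := by
    ext x
    rw [← columnYs_nonempty_iff, ← columnYs_nonempty_iff, columnYs_shiftUp,
      Finset.image_nonempty]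
  rw [maxX, maxX, this]

lemma lastCol_shiftUp : lastCol (shiftUp d P) = (lastCol P).image (· + d) := by
  rw [lastCol, lastCol, maxX_shiftUp, columnYs_shiftUp]

lemma isPolyomino_shiftUp (h : IsPolyomino P) : IsPolyomino (shiftUp d P) := by
  refine ⟨h.1.image _, ?_⟩
  rintro ⟨ax, ay⟩ ha ⟨bx, by'⟩ hb
  show Relation.ReflTransGen (AdjIn (shiftUp d P)) _ _
  have hpath := h.2 _ (mem_shiftUp.1 ha) _ (mem_shiftUp.1 hb)
  have := Relation.ReflTransGen.lift (p := AdjIn (shiftUp d P))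
    (fun c : Cell => (c.1, c.2 + d)) (fun u v huv =>
      ⟨Finset.mem_image_of_mem _ huv.1, Finset.mem_image_of_mem _ huv.2.1, by
        simpa [HexAdj, add_sub_add_right_eq_sub] using huv.2.2⟩) _ _ hpath
  simpa [Function.onFun] using this

lemma isCheesy_shiftUp {m : ℕ} (h : IsCheesy m P) : IsCheesy m (shiftUp d P) := by
  obtain ⟨hpoly, ⟨hleft, hstep⟩, hcols⟩ := h
  refine ⟨isPolyomino_shiftUp hpoly, ⟨fun x hx hbefore => ?_, fun x hx hx1 b hb => ?_⟩,
    fun x => ?_⟩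
  · simp only [columnYs_shiftUp, Finset.image_nonempty, Finset.image_eq_empty,
      numComponents_image_add] at hx hbefore ⊢
    exact hleft x hx hbefore
  · simp only [columnYs_shiftUp, Finset.image_nonempty] at hx hx1 hb ⊢
    obtain ⟨b', hb', hsame, c, hc, hadj⟩ := hstep x hx hx1 _ (mem_image_add_iff.1 hb)
    refine ⟨b' + d, add_mem_image_add hb', by simpa using hsame.image_add (d := d),
      c + d, add_mem_image_add hc, ?_⟩
    simpa [HexAdj, add_sub_add_right_eq_sub] using hadj
  · rw [columnYs_shiftUp, numComponents_image_add]
    refine ⟨(hcols x).1, fun h2 => ?_⟩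
    rcases (columnYs P x).eq_empty_or_nonempty with he | hne
    · simp [he, numComponents] at h2
    · rw [gapSize_image_add hne]; exact (hcols x).2 h2

end Translation

/-! ### Paths and connectivity -/

section Connectivity

variable {P : Finset Cell}

lemma lastCol_nonempty (hP : P.Nonempty) : (lastCol P).Nonempty := by
  have hne : (P.image Prod.fst).Nonempty := hP.image _
  rw [lastCol, columnYs_nonempty_iff, maxX, ← Finset.coe_max' hne, WithBot.unbotD_coe]
  exact Finset.max'_mem _ hne

lemma le_maxX {c : Cell} (hc : c ∈ P) : c.1 ≤ maxX P := by
  have hne : (P.image Prod.fst).Nonempty := ⟨_, Finset.mem_image_of_mem _ hc⟩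
  rw [maxX, ← Finset.coe_max' hne, WithBot.unbotD_coe]
  exact Finset.le_max' _ _ (Finset.mem_image_of_mem _ hc)

lemma columnYs_eq_empty_of_maxX_lt {x : ℤ} (hx : maxX P < x) : columnYs P x = ∅ :=
  Finset.eq_empty_of_forall_notMem fun y hy => by have := le_maxX (mem_columnYs.1 hy); omega

lemma maxX_eq_of_columnYs {X : ℤ} (h1 : (columnYs P X).Nonempty)
    (h2 : ∀ x, X < x → columnYs P x = ∅) : maxX P = X := by
  obtain ⟨y, hy⟩ := h1
  have hle := le_maxX (mem_columnYs.1 hy)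
  by_contra hne
  have hlast := lastCol_nonempty ⟨_, mem_columnYs.1 hy⟩
  rw [lastCol, h2 _ (by simp only at hle; omega)] at hlast
  exact Finset.not_nonempty_empty hlast

lemma reflTransGen_adjIn_vertical {x a b : ℤ}
    (h : ∀ y, min a b ≤ y → y ≤ max a b → (x, y) ∈ P) :
    Relation.ReflTransGen (AdjIn P) (x, a) (x, b) := by
  wlog hab : a ≤ b generalizing a b
  · exact reflTransGen_adjIn_symm (this (fun y h1 h2 => h y (by omega) (by omega)) (by omega))
  induction b, hab using Int.leInduction with
  | base => rfl
  | succ b hab ih =>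
    exact (ih fun y h1 h2 => h y (by omega) (by omega)).tail
      ⟨h b (by omega) (by omega), h (b + 1) (by omega) (by omega), hexAdj_up x b⟩

lemma exists_mem_eq_of_reflTransGen (f : Cell → ℤ)
    (hf : ∀ u v, HexAdj u v → f v ≤ f u + 1 ∧ f u ≤ f v + 1) {a b : Cell}
    (h : Relation.ReflTransGen (AdjIn P) a b) (ha : a ∈ P) {z : ℤ}
    (h1 : min (f a) (f b) ≤ z) (h2 : z ≤ max (f a) (f b)) : ∃ c ∈ P, f c = z := by
  induction h generalizing z with
  | refl => exact ⟨a, ha, by omega⟩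
  | @tail b c _ hbc ih =>
    have := hf _ _ hbc.2.2
    by_cases hz : min (f a) (f b) ≤ z ∧ z ≤ max (f a) (f b)
    · exact ih hz.1 hz.2
    · exact ⟨c, hbc.2.1, by omega⟩

lemma IsPolyomino.columnYs_nonempty (hP : IsPolyomino P) {a b : Cell} (ha : a ∈ P) (hb : b ∈ P)
    {x : ℤ} (h1 : a.1 ≤ x) (h2 : x ≤ b.1) : (columnYs P x).Nonempty := by
  obtain ⟨c, hc, rfl⟩ := exists_mem_eq_of_reflTransGen Prod.fst
    (fun _ _ => HexAdj.fst_le_add_one) (hP.2 a ha b hb) ha (z := x) (by omega) (by omega)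
  exact ⟨c.2, mem_columnYs.2 hc⟩

lemma IsPolyomino.sub_lt_card (hP : IsPolyomino P) (f : Cell → ℤ)
    (hf : ∀ u v, HexAdj u v → f v ≤ f u + 1 ∧ f u ≤ f v + 1) {a b : Cell} (ha : a ∈ P)
    (hb : b ∈ P) : f b - f a < P.card := by
  have hsub : Finset.Icc (min (f a) (f b)) (max (f a) (f b)) ⊆ P.image f := fun z hz => by
    rw [Finset.mem_Icc] at hz
    obtain ⟨c, hc, rfl⟩ := exists_mem_eq_of_reflTransGen f hf (hP.2 a ha b hb) ha hz.1 hz.2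
    exact Finset.mem_image_of_mem _ hc
  have := (Finset.card_le_card hsub).trans Finset.card_image_le
  rw [Int.card_Icc] at this
  omega

/-- Each cell is joined, column by column, to the lowest cell of column `0`. -/
lemma isPolyomino_of_rightwardSemiDirected (hne : P.Nonempty) (hx : ∀ c ∈ P, 0 ≤ c.1)
    (hcols : ∀ x, 0 ≤ x → x ≤ maxX P → (columnYs P x).Nonempty)
    (hR : RightwardSemiDirected P) : IsPolyomino P := by
  obtain ⟨c₀, hc₀⟩ := hne
  have hcol0 := hcols 0 le_rfl ((hx c₀ hc₀).trans (le_maxX hc₀))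
  have hI := eq_Icc_of_numComponents_eq_one hcol0 (hR.1 0 hcol0 fun x hx0 =>
    Finset.eq_empty_of_forall_notMem fun y hy => by
      have := hx _ (mem_columnYs.1 hy); simp only at this; omega)
  have hpath : ∀ n : ℕ, ∀ y, ((n : ℤ), y) ∈ P →
      Relation.ReflTransGen (AdjIn P) ((n : ℤ), y) (0, lowest (columnYs P 0)) := by
    intro n
    induction n with
    | zero =>
      intro y hy
      simp only [Nat.cast_zero] at hy ⊢
      refine reflTransGen_adjIn_vertical fun z h1 h2 => mem_columnYs.1 ?_
      rw [hI, Finset.mem_Icc]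
      have := lowest_le (mem_columnYs.2 hy); have := le_highest (mem_columnYs.2 hy)
      constructor <;> omega
    | succ n ih =>
      intro y hy
      push_cast at hy ⊢
      have hy' : y ∈ columnYs P (n + 1) := mem_columnYs.2 hy
      obtain ⟨b, -, hsame, c, hc, hadj⟩ := hR.2 n
        (hcols n (by omega) (by have := le_maxX hy; simp only at this; omega)) ⟨y, hy'⟩ y hy'
      have hvert : Relation.ReflTransGen (AdjIn P) ((n : ℤ) + 1, y) ((n : ℤ) + 1, b) :=
        reflTransGen_adjIn_vertical fun z h1 h2 => mem_columnYs.1 (hsame.2.2 z h1 h2)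
      exact (hvert.tail ⟨mem_columnYs.1 hsame.2.1, mem_columnYs.1 hc, hadj.symm⟩).trans
        (ih c (mem_columnYs.1 hc))
  have hpath' : ∀ c ∈ P, Relation.ReflTransGen (AdjIn P) c (0, lowest (columnYs P 0)) := by
    rintro ⟨x, y⟩ hc
    obtain ⟨n, rfl⟩ := Int.eq_ofNat_of_zero_le (hx _ hc)
    exact hpath n y hc
  exact ⟨⟨c₀, hc₀⟩, fun a ha b hb =>
    (hpath' a ha).trans (reflTransGen_adjIn_symm (hpath' b hb))⟩

end Connectivity

/-! ### Anchored representatives -/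

/-- The representative of a translation class used for counting: unlike `Normalized`, it stays a
representative when the last column is deleted. -/
def Anchored (P : Finset Cell) : Prop :=
  (∀ c ∈ P, 0 ≤ c.1) ∧ (0 : ℤ) ∈ columnYs P 0 ∧ ∀ y ∈ columnYs P 0, 0 ≤ y

section Anchored

variable {P : Finset Cell}

lemma Anchored.zero_mem (h : Anchored P) : ((0 : ℤ), (0 : ℤ)) ∈ P := mem_columnYs.1 h.2.1

lemma Anchored.lowest_columnYs_zero (h : Anchored P) : lowest (columnYs P 0) = 0 :=
  lowest_eq_of_forall h.2.1 h.2.2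

lemma Anchored.columnYs_eq_empty (h : Anchored P) {x : ℤ} (hx : x < 0) : columnYs P x = ∅ :=
  Finset.eq_empty_of_forall_notMem fun y hy => by
    have := h.1 _ (mem_columnYs.1 hy); simp only at this; omega

lemma Anchored.eq_zero_of_leftmost (h : Anchored P) {x : ℤ} (hx : (columnYs P x).Nonempty)
    (hbefore : ∀ x' < x, columnYs P x' = ∅) : x = 0 := by
  rcases lt_trichotomy x 0 with hlt | heq | hgt
  · rw [h.columnYs_eq_empty hlt] at hx; exact absurd hx Finset.not_nonempty_empty
  · exact heq
  · have := hbefore 0 hgt ▸ h.2.1; simp at this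

lemma Anchored.maxX_nonneg (h : Anchored P) : 0 ≤ maxX P := le_maxX h.zero_mem

lemma image_snd_shiftUp {d : ℤ} :
    (shiftUp d P).image Prod.snd = (P.image Prod.snd).image (· + d) := by
  simp only [shiftUp, Finset.image_image]; rfl

lemma Normalized.anchored_shiftUp (h : Normalized P) :
    Anchored (shiftUp (-lowest (columnYs P 0)) P) := by
  obtain ⟨c, hc, hc0⟩ := h.2.1
  have hne : (columnYs P 0).Nonempty := ⟨c.2, mem_columnYs.2 (hc0 ▸ hc)⟩
  refine ⟨fun c hc => ?_, ?_, ?_⟩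
  · obtain ⟨a, ha, rfl⟩ := Finset.mem_image.1 hc; exact (h.1 a ha).1
  · rw [columnYs_shiftUp]
    simpa using add_mem_image_add (d := -lowest (columnYs P 0)) (lowest_mem hne)
  · intro y hy
    rw [columnYs_shiftUp, mem_image_add_iff] at hy
    have := lowest_le hy; omega

lemma Anchored.normalized_shiftUp (h : Anchored P) :
    Normalized (shiftUp (-lowest (P.image Prod.snd)) P) := by
  have hne : (P.image Prod.snd).Nonempty := ⟨_, Finset.mem_image_of_mem _ h.zero_mem⟩
  obtain ⟨c, hc, hc2⟩ := Finset.mem_image.1 (lowest_mem hne)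
  refine ⟨fun c hc => ?_, ⟨(0, -lowest (P.image Prod.snd)),
    mem_shiftUp.2 (by simpa using h.zero_mem), rfl⟩,
    ⟨_, Finset.mem_image_of_mem _ hc, by simp [hc2]⟩⟩
  obtain ⟨a, ha, rfl⟩ := Finset.mem_image.1 hc
  exact ⟨h.1 a ha, by have := lowest_le (Finset.mem_image_of_mem Prod.snd ha); simp only; omega⟩

lemma Normalized.lowest_image_snd (h : Normalized P) : lowest (P.image Prod.snd) = 0 := by
  obtain ⟨c, hc, hc2⟩ := h.2.2
  exact lowest_eq_of_forall (hc2 ▸ Finset.mem_image_of_mem _ hc) fun y hy => by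
    obtain ⟨a, ha, rfl⟩ := Finset.mem_image.1 hy; exact (h.1 a ha).2

lemma heightN_lastCol_shiftUp (hP : P.Nonempty) {d : ℤ} :
    heightN (lastCol (shiftUp d P)) = heightN (lastCol P) := by
  rw [lastCol_shiftUp, heightN_image_add (lastCol_nonempty hP)]

end Anchored

/-- By connectivity, the box `[0, n] × [-n, n]` contains every anchored polyomino of area `n`. -/
def anchoredCheesy (n : ℕ) : Finset (Finset Cell) :=
  (Finset.Icc ((0 : ℤ), -(n : ℤ)) ((n : ℤ), (n : ℤ))).powerset.filter
    fun P => IsCheesy 1 P ∧ Anchored P ∧ P.card = n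

lemma mem_anchoredCheesy {n : ℕ} {P : Finset Cell} :
    P ∈ anchoredCheesy n ↔ IsCheesy 1 P ∧ Anchored P ∧ P.card = n := by
  rw [anchoredCheesy, Finset.mem_filter, Finset.mem_powerset, and_iff_right_iff_imp]
  rintro ⟨hch, hA, rfl⟩ c hc
  have h0 := hA.zero_mem
  have := hch.1.sub_lt_card Prod.fst (fun _ _ => HexAdj.fst_le_add_one) h0 hc
  have := hch.1.sub_lt_card Prod.snd (fun _ _ => HexAdj.snd_le_add_one) h0 hc
  have := hch.1.sub_lt_card Prod.snd (fun _ _ => HexAdj.snd_le_add_one) hc h0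
  have := hA.1 c hc
  simp only [Finset.mem_Icc, Prod.le_def]
  omega

lemma one_le_of_mem_anchoredCheesy {n : ℕ} {P : Finset Cell} (hP : P ∈ anchoredCheesy n) :
    1 ≤ n := by
  obtain ⟨hch, -, rfl⟩ := mem_anchoredCheesy.1 hP
  exact Finset.card_pos.2 hch.1.1

theorem c1CountHt_eq_card (n k : ℕ) :
    c1CountHt n k = ((anchoredCheesy n).filter fun P => heightN (lastCol P) = k).card := by
  rw [c1CountHt, ← Nat.card_eq_finsetCard]
  refine Nat.card_congr
    { toFun := fun P => ⟨shiftUp (-lowest (columnYs P.1 0)) P.1, ?_⟩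
      invFun := fun Q => ⟨shiftUp (-lowest (Q.1.image Prod.snd)) Q.1, ?_⟩
      left_inv := fun P => Subtype.ext ?_
      right_inv := fun Q => Subtype.ext ?_ }
  · obtain ⟨P, hch, hN, hcard, hk⟩ := P
    exact Finset.mem_filter.2 ⟨mem_anchoredCheesy.2 ⟨isCheesy_shiftUp hch, hN.anchored_shiftUp,
      card_shiftUp.trans hcard⟩, (heightN_lastCol_shiftUp hch.1.1).trans hk⟩
  · obtain ⟨hQ, hk⟩ := Finset.mem_filter.1 Q.2
    obtain ⟨hch, hA, hcard⟩ := mem_anchoredCheesy.1 hQ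
    exact ⟨isCheesy_shiftUp hch, hA.normalized_shiftUp, card_shiftUp.trans hcard,
      (heightN_lastCol_shiftUp hch.1.1).trans hk⟩
  · obtain ⟨P, hch, hN, -, -⟩ := P
    simp only [shiftUp_shiftUp, image_snd_shiftUp, lowest_image_add (hch.1.1.image _),
      hN.lowest_image_snd, zero_add, neg_neg, add_neg_cancel, shiftUp_zero]
  · obtain ⟨hQ, -⟩ := Finset.mem_filter.1 Q.2
    obtain ⟨hch, hA, -⟩ := mem_anchoredCheesy.1 hQ
    have hne : (columnYs Q.1 0).Nonempty := ⟨0, hA.2.1⟩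
    simp only [shiftUp_shiftUp, columnYs_shiftUp, lowest_image_add hne, hA.lowest_columnYs_zero,
      zero_add, neg_neg, add_neg_cancel, shiftUp_zero]

/-! ### Deleting and appending a last column -/

def dropLast (P : Finset Cell) : Finset Cell := P.filter fun c => c.1 < maxX P

def extendRight (Q : Finset Cell) (s : Finset ℤ) : Finset Cell :=
  Q ∪ s.image fun y => (maxX Q + 1, y)

section LastColumn

variable {P Q : Finset Cell} {s : Finset ℤ}

lemma card_columnYs (x : ℤ) : (columnYs P x).card = (P.filter fun c => c.1 = x).card :=
  Finset.card_image_of_injOn fun a ha b hb hab => by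
    simp only [Finset.mem_coe, Finset.mem_filter] at ha hb
    exact Prod.ext (ha.2.trans hb.2.symm) hab

lemma IsCheesy.heightN_lastCol_le_card (h : IsCheesy 1 P) : heightN (lastCol P) ≤ P.card := by
  have hne := lastCol_nonempty h.1.1
  have hcol : IsCheesyColumn 1 (lastCol P) := h.2.2 (maxX P)
  have hcard : (lastCol P).card ≤ P.card := (card_columnYs _).trans_le (Finset.card_filter_le _ _)
  by_cases hgap : gapCells (lastCol P) = ∅
  · rw [← card_eq_heightN_of_gapCells_eq_empty hne hgap]; exact hcard
  rw [← hcol.card_add_one_eq_heightN hne hgap]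
  -- a column with two components is not the leftmost one
  obtain ⟨x, hx, y, hy⟩ : ∃ x < maxX P, (columnYs P x).Nonempty := by
    by_contra! hall
    have h1 := h.2.1.1 (maxX P) hne hall
    rcases IsCheesyColumn.eq_Icc_or_eq_Icc_sdiff hcol hne with hI | ⟨g, hg1, hg2, hI⟩
    · exact hgap (by rw [hI]; exact gapCells_Icc (lowest_le_highest hne))
    · rw [← lastCol, hI, numComponents_Icc_sdiff hg1 hg2] at h1; omega
  rw [lastCol, card_columnYs]
  exact Finset.card_lt_card
    (Finset.filter_ssubset.2 ⟨(x, y), mem_columnYs.1 hy, by simp only; omega⟩)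

lemma columnYs_dropLast (x : ℤ) :
    columnYs (dropLast P) x = if x < maxX P then columnYs P x else ∅ := by
  ext y
  split_ifs with hx <;> simp [mem_columnYs, dropLast, hx]

lemma card_dropLast_add_card_lastCol : (dropLast P).card + (lastCol P).card = P.card := by
  rw [lastCol, card_columnYs, dropLast,
    ← Finset.card_filter_add_card_filter_not (s := P) (p := fun c : Cell => c.1 < maxX P)]
  congr 2
  exact Finset.filter_congr fun c (hc : c ∈ P) => by have := le_maxX hc; omega

lemma columnYs_extendRight (x : ℤ) :
    columnYs (extendRight Q s) x = if x = maxX Q + 1 then s else columnYs Q x := by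
  ext y
  split_ifs with hx <;>
    simp only [mem_columnYs, extendRight, Finset.mem_union, Finset.mem_image, Prod.mk.injEq]
  · subst hx
    refine ⟨fun h => h.elim (fun h => ?_) fun ⟨_, h, _, rfl⟩ => h,
      fun h => Or.inr ⟨y, h, rfl, rfl⟩⟩
    have := le_maxX h; simp at this
  · exact ⟨fun h => h.elim id fun ⟨_, _, h, _⟩ => absurd h.symm hx, Or.inl⟩

lemma card_extendRight : (extendRight Q s).card = Q.card + s.card := by
  rw [extendRight, Finset.card_union_of_disjoint, Finset.card_image_of_injective _
    fun a b h => (Prod.mk.injEq _ _ _ _ ▸ h).2]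
  exact Finset.disjoint_right.2 fun c hc hcQ => by
    obtain ⟨y, -, rfl⟩ := Finset.mem_image.1 hc
    have := le_maxX hcQ; simp at this

lemma maxX_extendRight (hs : s.Nonempty) : maxX (extendRight Q s) = maxX Q + 1 :=
  maxX_eq_of_columnYs (by rwa [columnYs_extendRight, if_pos rfl]) fun x hx => by
    rw [columnYs_extendRight, if_neg hx.ne', columnYs_eq_empty_of_maxX_lt (by omega)]

lemma lastCol_extendRight (hs : s.Nonempty) : lastCol (extendRight Q s) = s := by
  rw [lastCol, maxX_extendRight hs, columnYs_extendRight, if_pos rfl]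

lemma dropLast_extendRight (hs : s.Nonempty) : dropLast (extendRight Q s) = Q := by
  rw [dropLast, maxX_extendRight hs]
  ext c
  simp only [extendRight, Finset.mem_filter, Finset.mem_union, Finset.mem_image]
  constructor
  · rintro ⟨h | ⟨y, -, rfl⟩, hlt⟩
    · exact h
    · simp at hlt
  · exact fun h => ⟨Or.inl h, by have := le_maxX h; omega⟩

lemma extendRight_dropLast (h : maxX (dropLast P) + 1 = maxX P) :
    extendRight (dropLast P) (lastCol P) = P := by
  rw [extendRight, h]
  ext ⟨x, y⟩
  simp only [Finset.mem_union, dropLast, Finset.mem_filter, Finset.mem_image, lastCol,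
    mem_columnYs, Prod.mk.injEq]
  constructor
  · rintro (⟨hc, -⟩ | ⟨y, hy, rfl, rfl⟩) <;> assumption
  · intro hc
    rcases (le_maxX hc).lt_or_eq with hlt | heq
    · exact Or.inl ⟨hc, hlt⟩
    · exact Or.inr ⟨y, by simpa [← heq] using hc, heq.symm, rfl⟩

lemma Anchored.columnYs_nonempty (hA : Anchored P) (hP : IsPolyomino P) {x : ℤ} (h0 : 0 ≤ x)
    (hx : x ≤ maxX P) : (columnYs P x).Nonempty := by
  obtain ⟨y, hy⟩ := lastCol_nonempty hP.1
  exact hP.columnYs_nonempty hA.zero_mem (mem_columnYs.1 hy) h0 hx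

lemma Anchored.numComponents_columnYs_zero (hA : Anchored P) (hR : RightwardSemiDirected P) :
    numComponents (columnYs P 0) = 1 :=
  hR.1 0 ⟨0, hA.2.1⟩ fun _ => hA.columnYs_eq_empty

lemma Anchored.rightwardSemiDirected (hA : Anchored P) (h0 : numComponents (columnYs P 0) = 1)
    (hstep : ∀ x, 0 ≤ x → (columnYs P (x + 1)).Nonempty → ∀ b ∈ columnYs P (x + 1),
      ∃ b' ∈ columnYs P (x + 1), SameComp (columnYs P (x + 1)) b b' ∧
        ∃ c ∈ columnYs P x, HexAdj (x, c) (x + 1, b')) :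
    RightwardSemiDirected P :=
  ⟨fun x hx hbefore => hA.eq_zero_of_leftmost hx hbefore ▸ h0, fun x hx hx1 =>
    hstep x (not_lt.1 fun hneg => by simp [hA.columnYs_eq_empty hneg] at hx) hx1⟩

lemma anchored_dropLast (hA : Anchored P) (hX : 1 ≤ maxX P) : Anchored (dropLast P) := by
  refine ⟨fun c hc => hA.1 c (Finset.mem_filter.1 hc).1, ?_, ?_⟩ <;>
    simp only [columnYs_dropLast, if_pos (show (0 : ℤ) < maxX P by omega)]
  exacts [hA.2.1, hA.2.2]

lemma maxX_dropLast (hA : Anchored P) (hP : IsPolyomino P) (hX : 1 ≤ maxX P) :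
    maxX (dropLast P) = maxX P - 1 :=
  maxX_eq_of_columnYs
    (by rw [columnYs_dropLast, if_pos (by omega)]
        exact hA.columnYs_nonempty hP (by omega) (by omega))
    fun x hx => by rw [columnYs_dropLast, if_neg (by omega)]

lemma isCheesy_dropLast (h : IsCheesy 1 P) (hA : Anchored P) (hX : 1 ≤ maxX P) :
    IsCheesy 1 (dropLast P) := by
  obtain ⟨hP, hR, hcols⟩ := h
  have hA' := anchored_dropLast hA hX
  have hmax := maxX_dropLast hA hP hX
  have hR' : RightwardSemiDirected (dropLast P) := by
    refine hA'.rightwardSemiDirected ?_ fun x hx0 hx1 => ?_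
    · rw [columnYs_dropLast, if_pos (by omega)]; exact hA.numComponents_columnYs_zero hR
    · have hlt : x + 1 < maxX P := by
        by_contra hge; rw [columnYs_dropLast, if_neg hge] at hx1; simp at hx1
      rw [columnYs_dropLast, if_pos hlt] at hx1 ⊢
      rw [columnYs_dropLast, if_pos (by omega)]
      exact hR.2 x (hA.columnYs_nonempty hP hx0 (by omega)) hx1
  refine ⟨isPolyomino_of_rightwardSemiDirected
    ⟨_, Finset.mem_filter.2 ⟨hA.zero_mem, by simp only; omega⟩⟩ hA'.1
    (fun x h0 hx => ?_) hR', hR', fun x => ?_⟩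
  · rw [columnYs_dropLast, if_pos (by omega)]
    exact hA.columnYs_nonempty hP h0 (by omega)
  · rw [columnYs_dropLast]
    split_ifs
    exacts [hcols x, isCheesyColumn_empty 1]

lemma anchored_extendRight (hA : Anchored Q) : Anchored (extendRight Q s) := by
  have hne : (0 : ℤ) ≠ maxX Q + 1 := by have := hA.maxX_nonneg; omega
  refine ⟨fun c hc => ?_, ?_, ?_⟩
  · rcases Finset.mem_union.1 hc with hc | hc
    · exact hA.1 c hc
    · obtain ⟨y, -, rfl⟩ := Finset.mem_image.1 hc; have := hA.maxX_nonneg; simp only; omega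
  all_goals simp only [columnYs_extendRight, if_neg hne]
  exacts [hA.2.1, hA.2.2]

lemma isCheesy_extendRight (h : IsCheesy 1 Q) (hA : Anchored Q) (hs : s.Nonempty)
    (hcol : IsCheesyColumn 1 s)
    (hmeet : ∀ b ∈ s, ∃ b' ∈ s, SameComp s b b' ∧
      ∃ c ∈ lastCol Q, HexAdj (maxX Q, c) (maxX Q + 1, b')) :
    IsCheesy 1 (extendRight Q s) := by
  obtain ⟨hP, hR, hcols⟩ := h
  have hA' := anchored_extendRight (s := s) hA
  have hX := hA.maxX_nonneg
  have hR' : RightwardSemiDirected (extendRight Q s) := by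
    refine hA'.rightwardSemiDirected ?_ fun x hx0 hx1 => ?_
    · rw [columnYs_extendRight, if_neg (by omega)]; exact hA.numComponents_columnYs_zero hR
    · obtain ⟨y, hy⟩ := hx1
      have hle := le_maxX (mem_columnYs.1 hy)
      rw [maxX_extendRight hs] at hle
      rw [columnYs_extendRight x, if_neg (by simp only at hle; omega)]
      rcases (show x + 1 ≤ maxX Q ∨ x = maxX Q by simp only at hle; omega) with hlt | rfl
      · rw [columnYs_extendRight, if_neg (by omega)] at hy ⊢
        exact hR.2 x (hA.columnYs_nonempty hP hx0 (by omega)) ⟨y, hy⟩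
      · rw [columnYs_extendRight, if_pos rfl]; exact hmeet
  refine ⟨isPolyomino_of_rightwardSemiDirected ⟨_, Finset.mem_union_left _ hA.zero_mem⟩
    hA'.1 (fun x h0 hx => ?_) hR', hR', fun x => ?_⟩
  · rw [maxX_extendRight hs] at hx
    rw [columnYs_extendRight]
    split_ifs
    exacts [hs, hA.columnYs_nonempty hP h0 (by omega)]
  · rw [columnYs_extendRight]
    split_ifs
    exacts [hcol, hcols x]

end LastColumn

/-! ### Columns that can be appended -/

def ComponentsMeet (s : Finset ℤ) (lo hi : ℤ) : Prop :=
  ∀ b ∈ s, ∃ b' ∈ s, SameComp s b b' ∧ lo ≤ b' ∧ b' ≤ hi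

/-- The gap cell `g` of the last column is still reached, from `g - 1`. -/
lemma exists_hexAdj_lastCol_iff {Q : Finset Cell} (h : IsCheesy 1 Q) {y : ℤ} :
    (∃ c ∈ lastCol Q, HexAdj (maxX Q, c) (maxX Q + 1, y)) ↔
      lowest (lastCol Q) ≤ y ∧ y ≤ highest (lastCol Q) + 1 := by
  constructor
  · rintro ⟨c, hc, hadj⟩
    have := lowest_le hc; have := le_highest hc
    rw [hexAdj_add_one_iff] at hadj
    omega
  · intro hy
    have hne := lastCol_nonempty h.1.1
    have hcol : IsCheesyColumn 1 (lastCol Q) := h.2.2 (maxX Q)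
    have := lowest_le_highest hne
    suffices y ∈ lastCol Q ∨ y - 1 ∈ lastCol Q by
      rcases this with hc | hc
      exacts [⟨y, hc, hexAdj_add_one_iff.2 (Or.inl rfl)⟩,
        ⟨y - 1, hc, hexAdj_add_one_iff.2 (Or.inr (by ring))⟩]
    rcases IsCheesyColumn.eq_Icc_or_eq_Icc_sdiff hcol hne with hI | ⟨g, hg1, hg2, hI⟩
    all_goals (rw [hI]; simp only [Finset.mem_Icc, mem_Icc_sdiff_singleton]; omega)

/-- The columns `s` for which `extendRight Q s` is again a level one cheesy polyomino. -/
def Appendable (Q : Finset Cell) (s : Finset ℤ) : Prop :=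
  s.Nonempty ∧ IsCheesyColumn 1 s ∧
    ComponentsMeet s (lowest (lastCol Q)) (highest (lastCol Q) + 1)

section Appendable

variable {P Q : Finset Cell} {s : Finset ℤ}

lemma extendRight_mem_anchoredCheesy {k : ℕ} (hQ : Q ∈ anchoredCheesy k) (hs : Appendable Q s) :
    extendRight Q s ∈ anchoredCheesy (k + s.card) := by
  obtain ⟨hch, hA, rfl⟩ := mem_anchoredCheesy.1 hQ
  refine mem_anchoredCheesy.2 ⟨isCheesy_extendRight hch hA hs.1 hs.2.1 fun b hb => ?_,
    anchored_extendRight hA, card_extendRight⟩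
  obtain ⟨b', hb', hsame, hlo, hhi⟩ := hs.2.2 b hb
  exact ⟨b', hb', hsame, (exists_hexAdj_lastCol_iff hch).2 ⟨hlo, hhi⟩⟩

lemma appendable_lastCol (h : IsCheesy 1 P) (hA : Anchored P) (hX : 1 ≤ maxX P) :
    Appendable (dropLast P) (lastCol P) := by
  obtain ⟨X, hXeq⟩ : ∃ X, maxX P = X + 1 := ⟨maxX P - 1, by ring⟩
  have hprev : lastCol (dropLast P) = columnYs P X := by
    rw [lastCol, maxX_dropLast hA h.1 hX, columnYs_dropLast, if_pos (by omega), hXeq,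
      add_sub_cancel_right]
  have hlast : lastCol P = columnYs P (X + 1) := by rw [lastCol, hXeq]
  refine ⟨lastCol_nonempty h.1.1, h.2.2 _, fun b hb => ?_⟩
  rw [hlast] at hb ⊢
  obtain ⟨b', hb', hsame, c, hc, hadj⟩ :=
    h.2.1.2 X (hprev ▸ lastCol_nonempty (isCheesy_dropLast h hA hX).1.1) ⟨b, hb⟩ b hb
  refine ⟨b', hb', hsame, ?_⟩
  rw [← hprev] at hc
  have := lowest_le hc; have := le_highest hc
  rw [hexAdj_add_one_iff] at hadj
  omega

lemma card_filter_dropLast_eq {k n : ℕ} (hQ : Q ∈ anchoredCheesy k) {S : Finset (Finset ℤ)}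
    (hS : ∀ s ∈ S, Appendable Q s ∧ k + s.card = n) :
    ((anchoredCheesy n).filter fun P => 1 ≤ maxX P ∧ dropLast P = Q ∧ lastCol P ∈ S).card
      = S.card := by
  have hX := (mem_anchoredCheesy.1 hQ).2.1.maxX_nonneg
  refine Finset.card_nbij' lastCol (extendRight Q) (fun P hP => (Finset.mem_filter.1 hP).2.2.2)
    (fun s hs => ?_) (fun P hP => ?_) (fun s hs => lastCol_extendRight (hS s hs).1.1)
  · obtain ⟨happ, rfl⟩ := hS s hs
    simp only [Finset.mem_coe, Finset.mem_filter, maxX_extendRight happ.1,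
      dropLast_extendRight happ.1, lastCol_extendRight happ.1]
    exact ⟨extendRight_mem_anchoredCheesy hQ happ, by omega, trivial, hs⟩
  · obtain ⟨hPn, hX1, rfl, -⟩ := Finset.mem_filter.1 hP
    obtain ⟨hch, hA, -⟩ := mem_anchoredCheesy.1 hPn
    exact extendRight_dropLast (by rw [maxX_dropLast hA hch.1 hX1]; ring)

end Appendable

/-- The intervals of height `h` meeting `[lo, hi]`, parametrised by their lowest point. -/
def fullColumns (lo hi : ℤ) (h : ℕ) : Finset (Finset ℤ) :=
  (Finset.Icc (lo - h + 1) hi).image fun b => Finset.Icc b (b + h - 1)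

/-- The columns of height `h` with a one-cell gap `g` both of whose components meet `[lo, hi]`,
parametrised by the distance `a` from the bottom to the gap and by `g`. -/
def gappedColumns (lo hi : ℤ) (h : ℕ) : Finset (Finset ℤ) :=
  (Finset.Icc (1 : ℤ) (h - 2) ×ˢ Finset.Icc (lo + 1) (hi - 1)).image
    fun p => Finset.Icc (p.2 - p.1) (p.2 - p.1 + h - 1) \ {p.2}

section Columns

variable {s : Finset ℤ} {lo hi : ℤ} {h : ℕ}

lemma sameComp_Icc {a b x y : ℤ} (hx : x ∈ Finset.Icc a b) (hy : y ∈ Finset.Icc a b) :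
    SameComp (Finset.Icc a b) x y := by
  simp only [Finset.mem_Icc] at hx hy
  exact ⟨Finset.mem_Icc.2 hx, Finset.mem_Icc.2 hy, fun c h1 h2 => Finset.mem_Icc.2 (by omega)⟩

lemma sameComp_Icc_sdiff {a b g x y : ℤ} (hx : x ∈ Finset.Icc a b \ {g})
    (hy : y ∈ Finset.Icc a b \ {g}) (hxy : x < g ↔ y < g) :
    SameComp (Finset.Icc a b \ {g}) x y := by
  simp only [mem_Icc_sdiff_singleton] at hx hy
  exact ⟨mem_Icc_sdiff_singleton.2 hx, mem_Icc_sdiff_singleton.2 hy, fun c h1 h2 =>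
    mem_Icc_sdiff_singleton.2 (by omega)⟩

lemma SameComp.lt_iff_lt {g x y : ℤ} (h : SameComp s x y) (hg : g ∉ s) : x < g ↔ y < g := by
  have := h.2.2 g
  constructor <;> intro hlt <;> by_contra hge <;> exact hg (this (by omega) (by omega))

lemma fullColumns_spec (hh : 1 ≤ h) (hlohi : lo ≤ hi) (hs : s ∈ fullColumns lo hi h) :
    s.Nonempty ∧ IsCheesyColumn 1 s ∧ ComponentsMeet s lo hi ∧ s.card = h := by
  obtain ⟨b, hb, rfl⟩ := Finset.mem_image.1 hs
  rw [Finset.mem_Icc] at hb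
  refine ⟨Finset.nonempty_Icc.2 (by omega), isCheesyColumn_Icc 1 (by omega), fun y hy => ?_,
    by rw [Int.card_Icc]; omega⟩
  have hb' : max b lo ∈ Finset.Icc b (b + h - 1) := Finset.mem_Icc.2 ⟨by omega, by omega⟩
  exact ⟨max b lo, hb', sameComp_Icc hy hb', by omega, by omega⟩

lemma gappedColumns_spec (hs : s ∈ gappedColumns lo hi h) :
    s.Nonempty ∧ IsCheesyColumn 1 s ∧ ComponentsMeet s lo hi ∧ s.card + 1 = h := by
  obtain ⟨⟨a, g⟩, hag, rfl⟩ := Finset.mem_image.1 hs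
  simp only [Finset.mem_product, Finset.mem_Icc] at hag
  have h1 : g - a < g := by omega
  have h2 : g < g - a + h - 1 := by omega
  refine ⟨⟨g - a, mem_Icc_sdiff_singleton.2 ⟨le_rfl, by omega, by omega⟩⟩,
    isCheesyColumn_Icc_sdiff h1 h2, fun y hy => ?_, by rw [card_Icc_sdiff h1 h2]; omega⟩
  have hy' := mem_Icc_sdiff_singleton.1 hy
  by_cases hyg : y < g
  · have hb' : max (g - a) lo ∈ Finset.Icc (g - a) (g - a + h - 1) \ {g} :=
      mem_Icc_sdiff_singleton.2 ⟨by omega, by omega, by omega⟩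
    exact ⟨_, hb', sameComp_Icc_sdiff hy hb' (by omega), by omega, by omega⟩
  · have hb' : g + 1 ∈ Finset.Icc (g - a) (g - a + h - 1) \ {g} :=
      mem_Icc_sdiff_singleton.2 ⟨by omega, by omega, by omega⟩
    exact ⟨_, hb', sameComp_Icc_sdiff hy hb' (by omega), by omega, by omega⟩

lemma mem_fullColumns_iff (hh : 1 ≤ h) (hs : s.Nonempty) (hmeet : ComponentsMeet s lo hi) :
    s ∈ fullColumns lo hi h ↔ gapCells s = ∅ ∧ heightN s = h := by
  constructor
  · intro hmem
    obtain ⟨b, -, rfl⟩ := Finset.mem_image.1 hmem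
    rw [gapCells_Icc (by omega), heightN_Icc (by omega)]
    exact ⟨rfl, by omega⟩
  · rintro ⟨hgap, hheight⟩
    have hI := eq_Icc_of_gapCells_eq_empty hgap
    obtain ⟨b', hb', -, hlo, hhi⟩ := hmeet _ (lowest_mem hs)
    have := lowest_le hb'; have := le_highest hb'
    rw [heightN_eq] at hheight
    refine Finset.mem_image.2 ⟨lowest s, Finset.mem_Icc.2 ⟨by omega, by omega⟩, ?_⟩
    conv_rhs => rw [hI]
    congr 1
    omega

lemma mem_gappedColumns_iff (hs : s.Nonempty) (hcol : IsCheesyColumn 1 s)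
    (hmeet : ComponentsMeet s lo hi) :
    s ∈ gappedColumns lo hi h ↔ gapCells s ≠ ∅ ∧ heightN s = h := by
  constructor
  · intro hmem
    obtain ⟨⟨a, g⟩, hag, rfl⟩ := Finset.mem_image.1 hmem
    simp only [Finset.mem_product, Finset.mem_Icc] at hag
    rw [gapCells_Icc_sdiff (by omega) (by omega), heightN_Icc_sdiff (by omega) (by omega)]
    exact ⟨Finset.singleton_ne_empty g, by omega⟩
  · rintro ⟨hgap, hheight⟩
    rcases IsCheesyColumn.eq_Icc_or_eq_Icc_sdiff hcol hs with hI | ⟨g, hg1, hg2, hI⟩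
    · exact absurd (by rw [hI]; exact gapCells_Icc (lowest_le_highest hs)) hgap
    have hgs : g ∉ s := by rw [hI]; simp
    obtain ⟨b₁, hb₁, hsame₁, hlo₁, -⟩ := hmeet _ (lowest_mem hs)
    obtain ⟨b₂, hb₂, hsame₂, -, hhi₂⟩ := hmeet _ (highest_mem hs)
    have h₁ := (hsame₁.lt_iff_lt hgs).1 hg1
    have h₂ := (hsame₂.lt_iff_lt hgs).not.1 (by omega)
    have : b₂ ≠ g := fun h => hgs (h ▸ hb₂)
    rw [heightN_eq] at hheight
    refine Finset.mem_image.2 ⟨(g - lowest s, g), ?_, ?_⟩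
    · simp only [Finset.mem_product, Finset.mem_Icc]
      have := lowest_le hb₁; have := le_highest hb₂
      omega
    · conv_rhs => rw [hI]
      congr 2 <;> omega

lemma card_fullColumns (hh : 1 ≤ h) : (fullColumns lo hi h).card = (hi - lo + h).toNat := by
  rw [fullColumns, Finset.card_image_of_injOn, Int.card_Icc]
  · omega
  · intro b _ b' _ heq
    have := congrArg lowest heq
    simp only at this
    rwa [lowest_Icc (by omega), lowest_Icc (by omega)] at this

lemma card_gappedColumns : (gappedColumns lo hi h).card = (h - 2) * (hi - lo - 1).toNat := by
  rw [gappedColumns, Finset.card_image_of_injOn, Finset.card_product, Int.card_Icc, Int.card_Icc]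
  · congr 1 <;> omega
  · rintro ⟨a, g⟩ hag ⟨a', g'⟩ hag' heq
    simp only [Finset.coe_product, Set.mem_prod, Finset.coe_Icc, Set.mem_Icc] at hag hag'
    have hgap := congrArg gapCells heq
    have hlow := congrArg lowest heq
    simp only at hgap hlow
    rw [gapCells_Icc_sdiff (by omega) (by omega), gapCells_Icc_sdiff (by omega) (by omega),
      Finset.singleton_inj] at hgap
    rw [lowest_Icc_sdiff (by omega) (by omega), lowest_Icc_sdiff (by omega) (by omega)] at hlow
    simp only [Prod.mk.injEq]
    omega

end Columns

/-! ### The recurrence -/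

def verticalBar (n : ℕ) : Finset Cell := (Finset.Icc 0 ((n : ℤ) - 1)).image fun y => (0, y)

section VerticalBar

variable {n : ℕ}

lemma columnYs_verticalBar (x : ℤ) :
    columnYs (verticalBar n) x = if x = 0 then Finset.Icc 0 ((n : ℤ) - 1) else ∅ := by
  ext y
  split_ifs with hx <;> simp [mem_columnYs, verticalBar, hx, eq_comm (a := (0 : ℤ))]

lemma maxX_verticalBar (hn : 1 ≤ n) : maxX (verticalBar n) = 0 :=
  maxX_eq_of_columnYs (by rw [columnYs_verticalBar, if_pos rfl]; exact ⟨0, by simp; omega⟩)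
    fun x hx => by rw [columnYs_verticalBar, if_neg hx.ne']

lemma verticalBar_mem_anchoredCheesy (hn : 1 ≤ n) : verticalBar n ∈ anchoredCheesy n := by
  have hcol := columnYs_verticalBar (n := n)
  have hA : Anchored (verticalBar n) := ⟨fun c hc => by
    obtain ⟨y, -, rfl⟩ := Finset.mem_image.1 hc; exact le_rfl, by simp [hcol]; omega,
    fun y hy => by simp [hcol] at hy; exact hy.1⟩
  have hR : RightwardSemiDirected (verticalBar n) := hA.rightwardSemiDirected
    (by rw [hcol, if_pos rfl]; exact numComponents_Icc (by omega))
    fun x hx hx1 => by rw [hcol, if_neg (by omega)] at hx1; simp at hx1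
  refine mem_anchoredCheesy.2 ⟨⟨isPolyomino_of_rightwardSemiDirected
    ⟨_, hA.zero_mem⟩ hA.1 (fun x h0 hx => ?_) hR, hR, fun x => ?_⟩, hA, ?_⟩
  · rw [maxX_verticalBar hn] at hx
    rw [hcol, if_pos (by omega)]; exact ⟨0, by simp; omega⟩
  · rw [hcol]; split_ifs
    exacts [isCheesyColumn_Icc 1 (by omega), isCheesyColumn_empty 1]
  · rw [verticalBar, Finset.card_image_of_injective _ fun a b h => (Prod.mk.injEq _ _ _ _ ▸ h).2,
      Int.card_Icc]
    omega

lemma heightN_lastCol_verticalBar (hn : 1 ≤ n) : heightN (lastCol (verticalBar n)) = n := by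
  rw [lastCol, maxX_verticalBar hn, columnYs_verticalBar, if_pos rfl, heightN_Icc (by omega)]
  omega

lemma eq_verticalBar {P : Finset Cell} (hP : P ∈ anchoredCheesy n) (hX : maxX P = 0) :
    P = verticalBar n := by
  obtain ⟨hch, hA, hcard⟩ := mem_anchoredCheesy.1 hP
  have hx : ∀ c ∈ P, c.1 = 0 := fun c hc => by have := hA.1 c hc; have := le_maxX hc; omega
  have hP0 : P = (columnYs P 0).image fun y => (0, y) := by
    ext ⟨x, y⟩
    simp only [Finset.mem_image, mem_columnYs, Prod.mk.injEq]
    exact ⟨fun h => ⟨y, by simpa [← hx _ h] using h, (hx _ h).symm, rfl⟩,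
      fun ⟨_, h, hx, hy⟩ => hx ▸ hy ▸ h⟩
  have hI := eq_Icc_of_numComponents_eq_one ⟨0, hA.2.1⟩ (hA.numComponents_columnYs_zero hch.2.1)
  have hlow := lowest_le_highest (s := columnYs P 0) ⟨0, hA.2.1⟩
  rw [hA.lowest_columnYs_zero] at hI hlow
  have hcard' : (columnYs P 0).card = n := by
    rw [← hcard, card_columnYs]
    exact congrArg Finset.card (Finset.filter_true_of_mem hx)
  rw [hI, Int.card_Icc] at hcard'
  rw [hP0, hI, verticalBar]
  congr 2
  omega

lemma card_filter_maxX_eq_zero {h : ℕ} (hh : 1 ≤ h) :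
    ((anchoredCheesy n).filter fun P => maxX P = 0 ∧ heightN (lastCol P) = h).card
      = if n = h then 1 else 0 := by
  split_ifs with hnh
  · subst hnh
    refine Finset.card_eq_one.2 ⟨verticalBar n, Finset.eq_singleton_iff_unique_mem.2
      ⟨Finset.mem_filter.2 ⟨verticalBar_mem_anchoredCheesy hh, maxX_verticalBar hh,
        heightN_lastCol_verticalBar hh⟩, fun P hP => ?_⟩⟩
    obtain ⟨hPn, hX, -⟩ := Finset.mem_filter.1 hP
    exact eq_verticalBar hPn hX
  · refine Finset.card_eq_zero.2 (Finset.eq_empty_of_forall_notMem fun P hP => hnh ?_)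
    obtain ⟨hPn, hX, rfl⟩ := Finset.mem_filter.1 hP
    rw [eq_verticalBar hPn hX, heightN_lastCol_verticalBar (one_le_of_mem_anchoredCheesy hPn)]

end VerticalBar

section Recurrence

variable {n h : ℕ}

lemma card_filter_eq_sum_card {k : ℕ} (p : Finset ℤ → Prop) [DecidablePred p]
    (F : Finset Cell → Finset (Finset ℤ))
    (hk : ∀ P ∈ anchoredCheesy n, 1 ≤ maxX P → p (lastCol P) → k + (lastCol P).card = n)
    (hF : ∀ Q ∈ anchoredCheesy k, ∀ s, Appendable Q s → (s ∈ F Q ↔ p s))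
    (hF' : ∀ Q ∈ anchoredCheesy k, ∀ s ∈ F Q, Appendable Q s ∧ k + s.card = n) :
    ((anchoredCheesy n).filter fun P => 1 ≤ maxX P ∧ p (lastCol P)).card
      = ∑ Q ∈ anchoredCheesy k, (F Q).card := by
  rw [Finset.card_eq_sum_card_fiberwise (f := dropLast) (t := anchoredCheesy k)]
  · refine Finset.sum_congr rfl fun Q hQ => ?_
    rw [← card_filter_dropLast_eq hQ (hF' Q hQ), Finset.filter_filter]
    refine congrArg Finset.card (Finset.filter_congr fun P hP => ?_)
    obtain ⟨hch, hA, -⟩ := mem_anchoredCheesy.1 hP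
    constructor
    · rintro ⟨⟨hX, hp⟩, rfl⟩
      exact ⟨hX, rfl, (hF _ hQ _ (appendable_lastCol hch hA hX)).2 hp⟩
    · rintro ⟨hX, rfl, hs⟩
      exact ⟨⟨hX, (hF _ hQ _ (appendable_lastCol hch hA hX)).1 hs⟩, rfl⟩
  · intro P hP
    obtain ⟨hPn, hX, hp⟩ := Finset.mem_filter.1 hP
    obtain ⟨hch, hA, hcard⟩ := mem_anchoredCheesy.1 hPn
    refine mem_anchoredCheesy.2 ⟨isCheesy_dropLast hch hA hX, anchored_dropLast hA hX, ?_⟩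
    have := card_dropLast_add_card_lastCol (P := P)
    have := hk P hPn hX hp
    omega

lemma card_filter_full (hh : 1 ≤ h) :
    ((anchoredCheesy n).filter fun P =>
        1 ≤ maxX P ∧ (gapCells (lastCol P) = ∅ ∧ heightN (lastCol P) = h)).card
      = ∑ Q ∈ anchoredCheesy (n - h), (h + heightN (lastCol Q)) := by
  refine (card_filter_eq_sum_card (fun s => gapCells s = ∅ ∧ heightN s = h)
    (fun Q => fullColumns (lowest (lastCol Q)) (highest (lastCol Q) + 1) h) ?_ ?_ ?_).trans
    (Finset.sum_congr rfl fun Q hQ => ?_)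
  · rintro P hP - ⟨hgap, rfl⟩
    have hne := lastCol_nonempty (mem_anchoredCheesy.1 hP).1.1.1
    have := (mem_anchoredCheesy.1 hP).1.heightN_lastCol_le_card
    rw [← card_eq_heightN_of_gapCells_eq_empty hne hgap, (mem_anchoredCheesy.1 hP).2.2] at *
    omega
  · exact fun Q _ s hs => mem_fullColumns_iff hh hs.1 hs.2.2
  · intro Q hQ s hs
    have hQne := (mem_anchoredCheesy.1 hQ).1.1.1
    obtain ⟨hsne, hcol, hmeet, hcard⟩ :=
      fullColumns_spec hh (by have := lowest_le_highest (lastCol_nonempty hQne); omega) hs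
    have := one_le_of_mem_anchoredCheesy hQ
    exact ⟨⟨hsne, hcol, hmeet⟩, by omega⟩
  · rw [card_fullColumns hh, heightN_eq]
    have := lowest_le_highest (lastCol_nonempty (mem_anchoredCheesy.1 hQ).1.1.1)
    omega

lemma card_filter_gapped :
    ((anchoredCheesy n).filter fun P =>
        1 ≤ maxX P ∧ (gapCells (lastCol P) ≠ ∅ ∧ heightN (lastCol P) = h)).card
      = ∑ Q ∈ anchoredCheesy (n + 1 - h), (h - 2) * (heightN (lastCol Q) - 1) := by
  refine (card_filter_eq_sum_card (fun s => gapCells s ≠ ∅ ∧ heightN s = h)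
    (fun Q => gappedColumns (lowest (lastCol Q)) (highest (lastCol Q) + 1) h) ?_ ?_ ?_).trans
    (Finset.sum_congr rfl fun Q hQ => ?_)
  · rintro P hP - ⟨hgap, rfl⟩
    obtain ⟨hch, -, hcard⟩ := mem_anchoredCheesy.1 hP
    have hne := lastCol_nonempty hch.1.1
    have := hch.heightN_lastCol_le_card
    have hcol : IsCheesyColumn 1 (lastCol P) := hch.2.2 (maxX P)
    have := hcol.card_add_one_eq_heightN hne hgap
    omega
  · exact fun Q _ s hs => mem_gappedColumns_iff hs.1 hs.2.1 hs.2.2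
  · intro Q hQ s hs
    obtain ⟨hsne, hcol, hmeet, hcard⟩ := gappedColumns_spec hs
    have := one_le_of_mem_anchoredCheesy hQ
    exact ⟨⟨hsne, hcol, hmeet⟩, by omega⟩
  · rw [card_gappedColumns, heightN_eq]
    congr 1
    omega

/-- Sorting by the shape of the last column: a single column, a full column of height `h` over a
prefix of area `n - h`, or a column of height `h` with a gap over a prefix of area `n + 1 - h`. -/
theorem c1CountHt_recurrence (n h : ℕ) (hh : 1 ≤ h) :
    c1CountHt n h = (if n = h then 1 else 0)
      + ∑ Q ∈ anchoredCheesy (n - h), (h + heightN (lastCol Q))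
      + ∑ Q ∈ anchoredCheesy (n + 1 - h), (h - 2) * (heightN (lastCol Q) - 1) := by
  set S := (anchoredCheesy n).filter fun P => heightN (lastCol P) = h
  have e1 := Finset.card_filter_add_card_filter_not (s := S) (p := fun P => maxX P = 0)
  have e2 := Finset.card_filter_add_card_filter_not (s := S.filter fun P => ¬maxX P = 0)
    (p := fun P => gapCells (lastCol P) = ∅)
  have hX : ∀ P ∈ anchoredCheesy n, (¬maxX P = 0 ↔ 1 ≤ maxX P) := fun P hP => by
    have := (mem_anchoredCheesy.1 hP).2.1.maxX_nonneg; omega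
  simp only [S, Finset.filter_filter] at e1 e2
  rw [c1CountHt_eq_card, ← card_filter_maxX_eq_zero hh, ← card_filter_full hh,
    ← card_filter_gapped, ← e1, ← e2, add_assoc]
  congr 1
  · exact congrArg _ (Finset.filter_congr fun P _ => and_comm)
  congr 1 <;> refine congrArg _ (Finset.filter_congr fun P hP => ?_) <;> rw [← hX P hP] <;> tauto

end Recurrence

/-! ### Generating functions -/

open PowerSeries

lemma anchoredCheesy_zero : anchoredCheesy 0 = ∅ :=
  Finset.eq_empty_of_forall_notMem fun _ hP => by
    have := one_le_of_mem_anchoredCheesy hP; omega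

lemma heightN_lastCol_mem_range {n : ℕ} {P : Finset Cell} (hP : P ∈ anchoredCheesy n) :
    heightN (lastCol P) ∈ Finset.range (n + 2) := by
  have := (mem_anchoredCheesy.1 hP).1.heightN_lastCol_le_card
  rw [(mem_anchoredCheesy.1 hP).2.2] at this
  exact Finset.mem_range.2 (by omega)

lemma c1CountHt_zero_right (n : ℕ) : c1CountHt n 0 = 0 := by
  rw [c1CountHt_eq_card, Finset.card_eq_zero]
  exact Finset.eq_empty_of_forall_notMem fun P hP => by
    obtain ⟨hPn, h0⟩ := Finset.mem_filter.1 hP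
    have := one_le_heightN (lastCol_nonempty (mem_anchoredCheesy.1 hPn).1.1.1); omega

lemma c1CountHt_eq_zero_of_lt {n k : ℕ} (h : n < k) : c1CountHt n k = 0 := by
  rw [c1CountHt_eq_card, Finset.card_eq_zero]
  exact Finset.eq_empty_of_forall_notMem fun P hP => by
    obtain ⟨hPn, rfl⟩ := Finset.mem_filter.1 hP
    have := Finset.mem_range.1 (heightN_lastCol_mem_range hPn)
    have := (mem_anchoredCheesy.1 hPn).1.heightN_lastCol_le_card
    rw [(mem_anchoredCheesy.1 hPn).2.2] at this
    omega

lemma coeff_coeff_Cser (n k : ℕ) : (coeff n Cser).coeff k = c1CountHt n k := by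
  rw [Cser, coeff_mk, Polynomial.finsetSum_coeff]
  simp only [Polynomial.coeff_C_mul_X_pow]
  rw [Finset.sum_ite_eq]
  split_ifs with hk
  · rfl
  · rw [c1CountHt_eq_zero_of_lt (by simp at hk; omega), Nat.cast_zero]

lemma coeff_C1 (m : ℕ) : coeff m C1 = (anchoredCheesy m).card := by
  rw [C1, coeff_mk, Cser, coeff_mk, Polynomial.eval_finsetSum,
    Finset.card_eq_sum_card_fiberwise fun _ => heightN_lastCol_mem_range]
  simp [c1CountHt_eq_card]

lemma coeff_D1 (m : ℕ) :
    coeff m D1 = ∑ Q ∈ anchoredCheesy m, (heightN (lastCol Q) : ℚ) := by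
  rw [D1, coeff_mk, Cser, coeff_mk, map_sum, Polynomial.eval_finsetSum,
    ← Finset.sum_fiberwise_of_maps_to fun _ => heightN_lastCol_mem_range]
  refine Finset.sum_congr rfl fun k _ => ?_
  rw [Polynomial.derivative_C_mul_X_pow, Finset.sum_congr rfl fun Q hQ => by
    rw [(Finset.mem_filter.1 hQ).2], Finset.sum_const, c1CountHt_eq_card]
  simp [mul_comm]

theorem c1CountHt_eq (n h : ℕ) (hh : 1 ≤ h) :
    (c1CountHt n h : ℚ) = (if n = h then 1 else 0) + h * coeff (n - h) C1 + coeff (n - h) D1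
      + ((h - 2 : ℕ) : ℚ) * (coeff (n + 1 - h) D1 - coeff (n + 1 - h) C1) := by
  rw [c1CountHt_recurrence n h hh, coeff_C1, coeff_C1, coeff_D1, coeff_D1]
  have hgap : ∑ Q ∈ anchoredCheesy (n + 1 - h),
        ((h - 2 : ℕ) : ℚ) * ((heightN (lastCol Q) - 1 : ℕ) : ℚ)
      = ((h - 2 : ℕ) : ℚ) * (∑ Q ∈ anchoredCheesy (n + 1 - h), (heightN (lastCol Q) : ℚ)
        - (anchoredCheesy (n + 1 - h)).card) := by
    rw [Finset.card_eq_sum_ones, Nat.cast_sum, ← Finset.sum_sub_distrib, Finset.mul_sum]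
    refine Finset.sum_congr rfl fun Q hQ => ?_
    rw [Nat.cast_sub (one_le_heightN (lastCol_nonempty (mem_anchoredCheesy.1 hQ).1.1.1))]
  push_cast
  rw [hgap, Finset.sum_add_distrib, Finset.sum_const, nsmul_eq_mul]
  ring

lemma coeff_zero_C1 : coeff 0 C1 = 0 := by simp [coeff_C1, anchoredCheesy_zero]

lemma coeff_zero_D1 : coeff 0 D1 = 0 := by simp [coeff_D1, anchoredCheesy_zero]

/-- `∑ aₙ qⁿ ↦ ∑ aₙ qⁿ tⁿ`. -/
def diagLift : PowerSeries ℚ →+* PowerSeries (Polynomial ℚ) :=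
  (rescale (Polynomial.X : Polynomial ℚ)).comp liftP

lemma coeff_coeff_diagLift_mul_liftP (A F : PowerSeries ℚ) (n h : ℕ) :
    (coeff n (diagLift A * liftP F)).coeff h
      = if h ≤ n then coeff h A * coeff (n - h) F else 0 := by
  simp only [diagLift, liftP, RingHom.coe_comp, Function.comp_apply, coeff_mul,
    coeff_rescale, coeff_map, Polynomial.finsetSum_coeff,
    Polynomial.coeff_mul_C, Polynomial.coeff_X_pow,
    Finset.Nat.sum_antidiagonal_eq_sum_range_succ_mk]
  split_ifs with h_le
  · rw [Finset.sum_eq_single h] <;> simp +contextual [eq_comm]; omega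
  · exact Finset.sum_eq_zero fun i hi => by simp at hi; simp; omega

lemma diagLift_X : diagLift X = qp * tp := by
  simp [diagLift, liftP, rescale_X, qp, tp, mul_comm]

lemma coeff_coeff_tp_mul (G : PowerSeries (Polynomial ℚ)) (n h : ℕ) :
    (coeff n (tp * G)).coeff h = if h = 0 then 0 else (coeff n G).coeff (h - 1) := by
  rw [tp, coeff_C_mul]
  rcases h with _ | h
  · simp
  · simp [Polynomial.coeff_X_mul]

lemma mk_add_one_mul_one_sub_sq : (PowerSeries.mk fun n => (n + 1 : ℚ)) * (1 - X) ^ 2 = 1 := by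
  simpa [Nat.choose_one_right, add_comm] using mk_add_choose_mul_one_sub_pow_eq_one (S := ℚ) 1

lemma coeff_X_mul_mk_one (h : ℕ) :
    coeff h (X * PowerSeries.mk 1 : PowerSeries ℚ) = if h = 0 then 0 else 1 := by
  rcases h with _ | h <;> simp [coeff_succ_X_mul]

lemma coeff_X_mul_mk_add_one (h : ℕ) :
    coeff h ((X : PowerSeries ℚ) * PowerSeries.mk fun n => (n + 1 : ℚ)) = h := by
  rcases h with _ | h <;> simp [coeff_succ_X_mul]

lemma coeff_X_sq_mul_mk_add_one (h : ℕ) :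
    coeff h ((X : PowerSeries ℚ) ^ 2 * PowerSeries.mk fun n => (n + 1 : ℚ))
      = ((h - 1 : ℕ) : ℚ) := by
  rw [coeff_X_pow_mul']
  split_ifs with h2
  · rw [coeff_mk, Nat.cast_sub h2, Nat.cast_sub (by omega)]; push_cast; ring
  · rw [Nat.sub_eq_zero_of_le (by omega), Nat.cast_zero]

theorem Cser_eq :
    Cser = diagLift (X * PowerSeries.mk 1) * liftP (1 + D1)
      + diagLift (X * PowerSeries.mk fun n => (n + 1 : ℚ)) * liftP C1
      + tp * (diagLift (X ^ 2 * PowerSeries.mk fun n => (n + 1 : ℚ)) * liftP (D1 - C1)) := by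
  ext n h
  simp only [map_add (coeff n), Polynomial.coeff_add]
  simp only [coeff_coeff_diagLift_mul_liftP, coeff_coeff_tp_mul,
    coeff_coeff_Cser, coeff_X_mul_mk_one, coeff_X_mul_mk_add_one, coeff_X_sq_mul_mk_add_one]
  rcases h with _ | h
  · simp [c1CountHt_zero_right]
  rw [c1CountHt_eq n (h + 1) (by omega)]
  rcases Nat.lt_or_ge n (h + 1) with hn | hn
  · have h0 : n - (h + 1) = 0 := by omega
    have h0' : n - h = 0 := by omega
    simp only [add_tsub_cancel_right, Nat.reduceSubDiff, h0, h0', map_sub, coeff_zero_C1,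
      coeff_zero_D1]
    simp [hn.ne, not_le.2 hn]
  · obtain ⟨m, rfl⟩ := Nat.exists_eq_add_of_le hn
    simp only [le_add_iff_nonneg_right, zero_le, if_true, add_tsub_cancel_left, add_eq_left,
      Nat.add_eq_zero_iff, one_ne_zero, and_false, if_false, one_mul, map_add, coeff_one,
      add_tsub_cancel_right, show h + 1 + m + 1 - (h + 1) = m + 1 by omega, map_sub,
      show h + 1 - 2 = h - 1 by omega, show h ≤ h + 1 + m by omega,
      show h + 1 + m - h = m + 1 by omega]
    ring

lemma one_sub_qp_mul_tp : 1 - qp * tp = diagLift (1 - X) := by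
  rw [map_sub, map_one, diagLift_X]

lemma one_sub_qp_mul_tp_sq_mul_geom :
    (1 - qp * tp) ^ 2 * diagLift (X * PowerSeries.mk 1) = qp * tp * (1 - qp * tp) := by
  rw [one_sub_qp_mul_tp, ← diagLift_X, ← map_pow, ← map_mul, ← map_mul]
  congr 1
  linear_combination (1 - X) * X * mk_one_mul_one_sub_eq_one (S := ℚ)

lemma one_sub_qp_mul_tp_sq_mul_lin :
    (1 - qp * tp) ^ 2 * diagLift (X * PowerSeries.mk fun n => (n + 1 : ℚ)) = qp * tp := by
  rw [one_sub_qp_mul_tp, ← diagLift_X, ← map_pow, ← map_mul]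
  congr 1
  linear_combination X * mk_add_one_mul_one_sub_sq

lemma one_sub_qp_mul_tp_sq_mul_gap :
    (1 - qp * tp) ^ 2 * diagLift (X ^ 2 * PowerSeries.mk fun n => (n + 1 : ℚ))
      = qp ^ 2 * tp ^ 2 := by
  rw [one_sub_qp_mul_tp, ← mul_pow, ← diagLift_X, ← map_pow, ← map_pow, ← map_mul]
  congr 1
  linear_combination X ^ 2 * mk_add_one_mul_one_sub_sq

/-- The functional equation
`(1 − qt)²·C = qt(1 − qt) + qt·C₁ + qt(1 − qt)·D₁ + q²t³·(D₁ − C₁)`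
in `(ℚ[t])⟦q⟧`. -/
theorem stmt_12 :
    (1 - qp * tp) ^ 2 * Cser
      = qp * tp * (1 - qp * tp) + qp * tp * liftP C1
        + qp * tp * (1 - qp * tp) * liftP D1
        + qp ^ 2 * tp ^ 3 * liftP (D1 - C1) := by
  rw [Cser_eq, map_add liftP 1, map_one]
  linear_combination (1 + liftP D1) * one_sub_qp_mul_tp_sq_mul_geom
    + liftP C1 * one_sub_qp_mul_tp_sq_mul_lin + tp * liftP (D1 - C1) * one_sub_qp_mul_tp_sq_mul_gap
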